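/- arXiv:math/0606689 — 8 statements merged into one kernel-verified Lean document; each statement's English description precedes it below -/
import Mathlib

section
/- Let C ⊆ D be a ring extension of commutative rings satisfying Lying-Over and Going-Down. If the minimal prime ideals of D are pairwise comaximal, then the minimal prime ideals of C are pairwise comaximal. -/
open Polynomial TensorProduct

/-- A ring satisfies MPC if its minimal primes are pairwise comaximal. -/
def MPC (A : Type*) [CommRing A] : Prop :=
  ∀ p ∈ minimalPrimes A, ∀ q ∈ minimalPrimes A, p ≠ q → p ⊔ q = ⊤

/-- A domain is an S-domain if every height-one prime `p` satisfies `ht (p[X]) = 1`. -/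
def IsSDomain (D : Type*) [CommRing D] [IsDomain D] : Prop :=
  ∀ p : PrimeSpectrum D, Order.height p = 1 →
    ∀ P : PrimeSpectrum D[X], P.asIdeal = p.asIdeal.map (C : D →+* D[X]) →
      Order.height P = 1

/-- A ring is a strong S-ring if the quotient by every prime is an S-domain. -/
def StrongSRing (A : Type*) [CommRing A] : Prop :=
  ∀ p : PrimeSpectrum A, IsSDomain (A ⧸ p.asIdeal)

/-- A ring is a stably strong S-ring if all polynomial rings over it in `n ≥ 1`
variables are strong S-rings. -/
def StablyStrongSRing (A : Type*) [CommRing A] : Prop :=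
  ∀ n : ℕ, 0 < n → StrongSRing (MvPolynomial (Fin n) A)

/-- A ring is locally finite dimensional (LFD) if every prime has finite height. -/
def LFD (A : Type*) [CommRing A] : Prop :=
  ∀ p : PrimeSpectrum A, Order.height p ≠ ⊤

/-- A ring is catenarian if it satisfies MPC, is LFD, and adjacent primes `P ⋖ Q`
satisfy `ht Q = ht P + 1`. -/
def Catenarian (A : Type*) [CommRing A] : Prop :=
  MPC A ∧ LFD A ∧
    ∀ P Q : PrimeSpectrum A, P ⋖ Q → Order.height Q = Order.height P + 1

/-- A ring is universally catenarian if all polynomial rings over it in `n ≥ 1`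
variables are catenarian. -/
def UniversallyCatenarian (A : Type*) [CommRing A] : Prop :=
  ∀ n : ℕ, 0 < n → Catenarian (MvPolynomial (Fin n) A)

/-- An S-ring: MPC together with the quotient by each minimal prime being an S-domain. -/
def SRing (A : Type*) [CommRing A] : Prop :=
  MPC A ∧ ∀ p : PrimeSpectrum A, p.asIdeal ∈ minimalPrimes A → IsSDomain (A ⧸ p.asIdeal)

/-- The transcendence degree of a `k`-algebra `A`: the supremum of the cardinalities
of algebraically independent subsets of `A` over `k`. -/
noncomputable def trdeg (k A : Type*) [CommRing k] [CommRing A] [Algebra k A] : Cardinal :=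
  ⨆ s : {s : Set A // AlgebraicIndependent k ((↑) : s → A)}, Cardinal.mk s.1

/-! Given a maximal ideal `m` of `C` containing minimal primes `p` and `q`, pick `M` over `m`
(Lying-Over) and, by Going-Down, primes of `D` inside `M` over `p` and `q`. Minimal primes of `D`
below these still lie over `p` and `q` by minimality of `p` and `q`; both sit in `M`, so MPC for
`D` makes them equal, whence `p = q`. -/

theorem MPC.eq_of_le {A : Type*} [CommRing A] (h : MPC A) {p q I : Ideal A}
    (hp : p ∈ minimalPrimes A) (hq : q ∈ minimalPrimes A) (hI : I ≠ ⊤)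
    (hpI : p ≤ I) (hqI : q ≤ I) : p = q := by
  by_contra hpq
  exact hI (top_le_iff.mp (h p hp q hq hpq ▸ sup_le hpI hqI))

theorem mpc_of_forall_isMaximal {A : Type*} [CommRing A]
    (h : ∀ m : Ideal A, m.IsMaximal → ∀ p ∈ minimalPrimes A, ∀ q ∈ minimalPrimes A,
      p ≤ m → q ≤ m → p = q) : MPC A := by
  intro p hp q hq hpq
  by_contra hne
  obtain ⟨m, hm, hle⟩ := Ideal.exists_le_maximal _ hne
  exact hpq (h m hm p hp q hq (le_sup_left.trans hle) (le_sup_right.trans hle))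

theorem Ideal.comap_eq_of_le_of_mem_minimalPrimes {C D : Type*} [CommRing C] [CommRing D]
    (f : C →+* D) {p : Ideal C} (hp : p ∈ minimalPrimes C) {P₀ P : Ideal D} [P₀.IsPrime]
    (hP₀P : P₀ ≤ P) (hPp : P.comap f = p) : P₀.comap f = p := by
  have hle : P₀.comap f ≤ p := hPp ▸ Ideal.comap_mono hP₀P
  exact le_antisymm hle (hp.2 ⟨Ideal.IsPrime.comap f, bot_le⟩ hle)

theorem stmt0_general {C D : Type*} [CommRing C] [CommRing D] (f : C →+* D)
    (hLO : ∀ p : Ideal C, p.IsPrime → ∃ P : Ideal D, P.IsPrime ∧ P.comap f = p)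
    (hGD : ∀ p q : Ideal C, p.IsPrime → q.IsPrime → p ≤ q →
      ∀ Q : Ideal D, Q.IsPrime → Q.comap f = q →
        ∃ P : Ideal D, P.IsPrime ∧ P ≤ Q ∧ P.comap f = p)
    (hD : MPC D) : MPC C := by
  refine mpc_of_forall_isMaximal fun m hm p hp q hq hpm hqm => ?_
  obtain ⟨M, hM, hMm⟩ := hLO m hm.isPrime
  obtain ⟨P, hP, hPM, hPp⟩ := hGD p m hp.1.1 hm.isPrime hpm M hM hMm
  obtain ⟨Q, hQ, hQM, hQq⟩ := hGD q m hq.1.1 hm.isPrime hqm M hM hMm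
  obtain ⟨P₀, hP₀, hP₀P⟩ := Ideal.exists_minimalPrimes_le (bot_le : ⊥ ≤ P)
  obtain ⟨Q₀, hQ₀, hQ₀Q⟩ := Ideal.exists_minimalPrimes_le (bot_le : ⊥ ≤ Q)
  have : P₀.IsPrime := hP₀.1.1
  have : Q₀.IsPrime := hQ₀.1.1
  have hPQ₀ : P₀ = Q₀ := hD.eq_of_le hP₀ hQ₀ hM.ne_top (hP₀P.trans hPM) (hQ₀Q.trans hQM)
  rw [← Ideal.comap_eq_of_le_of_mem_minimalPrimes f hp hP₀P hPp,
    ← Ideal.comap_eq_of_le_of_mem_minimalPrimes f hq hQ₀Q hQq, hPQ₀]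

/-- If `C ⊆ D` is a ring extension satisfying Lying-Over and
Going-Down and `D` satisfies MPC, then `C` satisfies MPC. -/
theorem stmt0 {C D : Type*} [CommRing C] [CommRing D] (f : C →+* D)
    (hinj : Function.Injective f)
    (hLO : ∀ p : Ideal C, p.IsPrime → ∃ P : Ideal D, P.IsPrime ∧ P.comap f = p)
    (hGD : ∀ p q : Ideal C, p.IsPrime → q.IsPrime → p ≤ q →
      ∀ Q : Ideal D, Q.IsPrime → Q.comap f = q →
        ∃ P : Ideal D, P.IsPrime ∧ P ≤ Q ∧ P.comap f = p)
    (hD : MPC D) : MPC C :=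
  stmt0_general f hLO hGD hD
end

section
/- If A is a commutative ring satisfying MPC and S is a multiplicative subset of A, then the localization S⁻¹A satisfies MPC. -/
open Polynomial TensorProduct

theorem IsLocalization.comap_mem_minimalPrimes {R A : Type*} [CommSemiring R] [CommSemiring A]
    [Algebra R A] (S : Submonoid R) [IsLocalization S A] {p : Ideal A} (hp : p ∈ minimalPrimes A) :
    p.comap (algebraMap R A) ∈ minimalPrimes R := by
  have hp' : p ∈ ((⊥ : Ideal R).map (algebraMap R A)).minimalPrimes := by rwa [Ideal.map_bot]
  rw [IsLocalization.minimalPrimes_map S] at hp'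
  exact hp'

theorem MPC.of_isLocalization {A B : Type*} [CommRing A] [CommRing B] [Algebra A B]
    (S : Submonoid A) [IsLocalization S B] (hA : MPC A) : MPC B := by
  intro p hp q hq hne
  have hcomap : p.comap (algebraMap A B) ⊔ q.comap (algebraMap A B) = ⊤ :=
    hA _ (IsLocalization.comap_mem_minimalPrimes S hp) _
      (IsLocalization.comap_mem_minimalPrimes S hq)
      ((IsLocalization.orderEmbedding S B).injective.ne hne)
  rw [← IsLocalization.map_under S B p, ← IsLocalization.map_under S B q, ← Ideal.map_sup,
    hcomap, Ideal.map_top]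

/-- MPC passes to localizations. -/
theorem stmt1 {A : Type*} [CommRing A] (hA : MPC A) (S : Submonoid A) :
    MPC (Localization S) :=
  hA.of_isLocalization S
end

section
/- If A is a commutative ring satisfying MPC, then the polynomial ring A[X₁,...,Xₙ] satisfies MPC for every positive integer n. -/
open Polynomial TensorProduct

/-
Every minimal prime `P` of `A[X₁, …, Xₙ]` is the extension `p[X₁, …, Xₙ]` of a minimal prime `p`
of `A`: below `P` lies `p[X₁, …, Xₙ]` for some minimal prime `p ⊆ P ∩ A`, and this extension is
prime, so minimality forces equality. Extension commutes with sums and preserves `⊤`, so two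
distinct minimal primes of the polynomial ring are comaximal because their contractions are.
-/

namespace MvPolynomial

variable {A σ : Type*} [CommRing A]

theorem isPrime_map_C (p : Ideal A) [p.IsPrime] :
    (p.map (C : A →+* MvPolynomial σ A)).IsPrime := by
  rw [← Ideal.mk_ker (I := p), ← ker_map]
  exact RingHom.ker_isPrime _

theorem exists_minimalPrimes_eq_map_C {P : Ideal (MvPolynomial σ A)}
    (hP : P ∈ minimalPrimes (MvPolynomial σ A)) :
    ∃ p ∈ minimalPrimes A, P = p.map C := by
  have : P.IsPrime := hP.1.1
  obtain ⟨p, hp, hpP⟩ := Ideal.exists_minimalPrimes_le (bot_le : (⊥ : Ideal A) ≤ P.comap C)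
  have : p.IsPrime := hp.1.1
  have hmap_le : p.map C ≤ P := Ideal.map_le_iff_le_comap.mpr hpP
  exact ⟨p, hp, le_antisymm (hP.2 ⟨isPrime_map_C p, bot_le⟩ hmap_le) hmap_le⟩

end MvPolynomial

theorem MPC.mvPolynomial {A : Type*} [CommRing A] (hA : MPC A) (σ : Type*) :
    MPC (MvPolynomial σ A) := by
  intro P hP Q hQ hPQ
  obtain ⟨p, hp, rfl⟩ := MvPolynomial.exists_minimalPrimes_eq_map_C hP
  obtain ⟨q, hq, rfl⟩ := MvPolynomial.exists_minimalPrimes_eq_map_C hQ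
  have hpq : p ≠ q := by rintro rfl; exact hPQ rfl
  rw [← Ideal.map_sup, hA p hp q hq hpq, Ideal.map_top]

theorem stmt2_general {A : Type*} [CommRing A] (hA : MPC A) (n : ℕ) :
    MPC (MvPolynomial (Fin n) A) :=
  hA.mvPolynomial (Fin n)

/-- MPC passes to polynomial rings in `n ≥ 1` variables. -/
theorem stmt2 {A : Type*} [CommRing A] (hA : MPC A) (n : ℕ) (hn : 0 < n) :
    MPC (MvPolynomial (Fin n) A) :=
  stmt2_general hA n
end

section
/- Let A ⊆ T be an integral extension of commutative rings. If T is a strong S-ring, then A is a strong S-ring. -/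
open Polynomial TensorProduct

/-!
Over a prime `p` of `A` choose a prime `Q` of `T`; then `A ⧸ p ⊆ T ⧸ Q` is an integral extension
of domains, so it suffices to descend the S-domain property along an integral extension `D ⊆ E`
of domains. Let `p` be a height-one prime of `D` and `y` a prime with `y ⊊ p[X]` in `D[X]`.
As `D[X] ⊆ E[X]` is integral, lying over and going up give primes `Q₁ ⊊ Q₂` of `E[X]` over `y`
and `p[X]`. By incomparability `q := Q₂ ∩ E` has height one and `Q₂ = q[X]`, as both lie over
`p[X]`. Since `E` is an S-domain, `ht Q₂ = 1`, so `Q₁ = 0` and hence `y = 0`.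
-/

lemma Order.height_eq_one_iff {α : Type*} [PartialOrder α] [OrderBot α] {x : α} :
    height x = 1 ↔ ⊥ < x ∧ ∀ y < x, y = ⊥ := by
  rw [le_antisymm_iff, Order.one_le_iff_ne_zero, Order.height_ne_zero, isMin_iff_eq_bot,
    ← Nat.cast_one, Order.height_le_coe_iff, bot_lt_iff_ne_bot, and_comm]
  simp [isMin_iff_eq_bot]

attribute [local instance] Polynomial.algebra

namespace Ideal

variable {R S : Type*} [CommRing R] [CommRing S]

lemma comap_C_map_C (I : Ideal R) : (I.map (C : R →+* R[X])).comap C = I := by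
  ext a
  rw [mem_comap, mem_map_C_iff]
  refine ⟨fun h ↦ by simpa using h 0, fun h n ↦ ?_⟩
  rw [coeff_C]
  split_ifs <;> simp [h]

lemma comap_mapRingHom_map_C (g : R →+* S) (J : Ideal S) :
    (J.map (C : S →+* S[X])).comap (mapRingHom g) = (J.comap g).map C := by
  ext f
  simp [mem_map_C_iff]

variable [Algebra R S]

theorem IsIntegral.eq_of_le_of_under_eq [Algebra.IsIntegral R S] {I J : Ideal S} [I.IsPrime]
    (hle : I ≤ J) (h : I.under R = J.under R) : I = J :=
  by_contra fun hne ↦ (IsIntegral.comap_lt_comap (lt_of_le_of_ne hle hne)).ne h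

lemma under_under_eq_of_under_eq_map_C {Q : Ideal S[X]} {p : Ideal R}
    (hQ : Q.under R[X] = p.map C) : (Q.under S).under R = p := by
  rw [under_under, ← under_under (B := R[X]), hQ]
  exact comap_C_map_C p

lemma eq_map_C_under_of_under_eq_map_C [Algebra.IsIntegral R S] {Q : Ideal S[X]} [Q.IsPrime]
    {p : Ideal R} (hQ : Q.under R[X] = p.map C) : Q = (Q.under S).map C := by
  refine (IsIntegral.eq_of_le_of_under_eq (R := R[X]) map_comap_le ?_).symm
  rw [hQ, under_def, Polynomial.algebraMap_def, comap_mapRingHom_map_C]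
  exact congrArg _ (under_under_eq_of_under_eq_map_C hQ)

end Ideal

section IntegralExtension

open Order

variable {D E : Type*} [CommRing D] [CommRing E] [Algebra D E]

lemma PrimeSpectrum.bot_lt_of_under_eq [IsDomain D] [IsDomain E] [FaithfulSMul D E]
    {p : PrimeSpectrum D} {q : PrimeSpectrum E} (hqp : q.asIdeal.under D = p.asIdeal)
    (hp : ⊥ < p) : ⊥ < q := by
  rw [bot_lt_iff_ne_bot] at hp ⊢
  rintro rfl
  exact hp (PrimeSpectrum.ext (by rw [← hqp]; simp))

variable [Algebra.IsIntegral D E]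

lemma PrimeSpectrum.height_eq_one_of_under_eq [IsDomain D] [IsDomain E] [FaithfulSMul D E]
    {p : PrimeSpectrum D} {q : PrimeSpectrum E} (hqp : q.asIdeal.under D = p.asIdeal)
    (hp : height p = 1) : height q = 1 := by
  rw [height_eq_one_iff] at hp ⊢
  refine ⟨bot_lt_of_under_eq hqp hp.1, fun y hy ↦ ?_⟩
  have hyq : y.asIdeal.under D < p.asIdeal := hqp ▸ Ideal.IsIntegral.comap_lt_comap hy
  ext1
  exact Ideal.IsIntegral.eq_bot_of_comap_eq_bot D
    (congrArg PrimeSpectrum.asIdeal (hp.2 ⟨y.asIdeal.under D, inferInstance⟩ hyq))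

theorem IsSDomain.of_isIntegral [IsDomain D] [IsDomain E] [FaithfulSMul D E]
    (hE : IsSDomain E) : IsSDomain D := by
  intro p hp P hP
  have hPp : P.asIdeal.under D = p.asIdeal := by
    rw [hP]
    exact Ideal.comap_C_map_C p.asIdeal
  rw [height_eq_one_iff]
  refine ⟨PrimeSpectrum.bot_lt_of_under_eq hPp (height_eq_one_iff.mp hp).1, fun y hyP ↦ ?_⟩
  obtain ⟨⟨Q₁, _, _⟩⟩ := Ideal.nonempty_primesOver (S := E[X]) y.asIdeal
  obtain ⟨Q₂, hQ₁₂, _, _⟩ :=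
    Ideal.exists_ideal_gt_liesOver_of_lt (R := D[X]) (p := y.asIdeal) Q₁ hyP
  have hQ₂P : Q₂.under D[X] = p.asIdeal.map C := by rw [← hP, Ideal.over_def Q₂ P.asIdeal]
  let q : PrimeSpectrum E := ⟨Q₂.under E, inferInstance⟩
  have hq : height q = 1 :=
    PrimeSpectrum.height_eq_one_of_under_eq (Ideal.under_under_eq_of_under_eq_map_C hQ₂P) hp
  have hQ₂ : height (⟨Q₂, inferInstance⟩ : PrimeSpectrum E[X]) = 1 :=
    hE q hq _ (Ideal.eq_map_C_under_of_under_eq_map_C hQ₂P)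
  have hQ₁ : Q₁ = ⊥ :=
    congrArg PrimeSpectrum.asIdeal ((height_eq_one_iff.mp hQ₂).2 ⟨Q₁, inferInstance⟩ hQ₁₂)
  ext1
  rw [Ideal.over_def Q₁ y.asIdeal, hQ₁]
  simp

theorem StrongSRing.of_isIntegral [FaithfulSMul D E] (hE : StrongSRing E) : StrongSRing D := by
  intro p
  obtain ⟨⟨Q, _, _⟩⟩ := Ideal.nonempty_primesOver (S := E) p.asIdeal
  exact IsSDomain.of_isIntegral (E := E ⧸ Q) (hE ⟨Q, inferInstance⟩)

end IntegralExtension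

/-- The strong S-property descends along integral ring extensions. -/
theorem stmt3 {A T : Type*} [CommRing A] [CommRing T] (f : A →+* T)
    (hinj : Function.Injective f) (hint : f.IsIntegral)
    (hT : StrongSRing T) : StrongSRing A := by
  let : Algebra A T := f.toAlgebra
  have : Algebra.IsIntegral A T := ⟨hint⟩
  have : FaithfulSMul A T := (faithfulSMul_iff_algebraMap_injective A T).mpr hinj
  exact StrongSRing.of_isIntegral hT
end

section
/- Let A and B be algebras over a field k such that the tensor product A ⊗_k B satisfies MPC. Then A satisfies MPC and B satisfies MPC. -/
open Polynomial TensorProduct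

/-! Let `p ≠ q` be minimal primes of `A` lying in a common maximal ideal `m`. Since
`A → A ⊗[k] B` is faithfully flat, `m` is the contraction of a prime `M`, and going down gives
primes inside `M` contracting to `p` and `q`. Minimal primes of `A ⊗[k] B` below those still
contract to `p` and `q` by minimality, so they are distinct but both lie in `M`, contradicting
MPC for `A ⊗[k] B`. The statement for `B` follows by symmetry of the tensor product. -/

theorem Ideal.exists_mem_minimalPrimes_le_liesOver {R S : Type*} [CommRing R] [CommRing S]
    [Algebra R S] [Algebra.HasGoingDown R S] {p : Ideal R} (hp : p ∈ minimalPrimes R)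
    (Q : Ideal S) [Q.IsPrime] (hpQ : p ≤ Q.under R) :
    ∃ P ∈ minimalPrimes S, P ≤ Q ∧ P.LiesOver p := by
  rw [minimalPrimes_eq_minimals] at hp
  have : p.IsPrime := hp.prop
  obtain ⟨P', hP'Q, _, hP'p⟩ := Ideal.exists_ideal_le_liesOver_of_le Q hpQ
  obtain ⟨P, hP, hPP'⟩ := Ideal.exists_minimalPrimes_le (bot_le : ⊥ ≤ P')
  have : P.IsPrime := Ideal.IsMinimalPrime.isPrime hP
  have hPp : P.under R ≤ p := hP'p.over ▸ Ideal.comap_mono hPP'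
  exact ⟨P, hP, hPP'.trans hP'Q, ⟨(hp.eq_of_le inferInstance hPp).symm⟩⟩

theorem MPC.of_hasGoingDown {R S : Type*} [CommRing R] [CommRing S] [Algebra R S]
    [Algebra.HasGoingDown R S] (hlo : Function.Surjective (PrimeSpectrum.comap (algebraMap R S)))
    (h : MPC S) : MPC R := by
  intro p hp q hq hpq
  by_contra hne
  obtain ⟨m, hm, hpqm⟩ := Ideal.exists_le_maximal _ hne
  obtain ⟨M, hM⟩ := hlo ⟨m, hm.isPrime⟩
  have hMm : M.asIdeal.under R = m := congrArg PrimeSpectrum.asIdeal hM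
  obtain ⟨P, hP, hPM, hPp⟩ :=
    Ideal.exists_mem_minimalPrimes_le_liesOver hp M.asIdeal (hMm ▸ le_sup_left.trans hpqm)
  obtain ⟨Q, hQ, hQM, hQq⟩ :=
    Ideal.exists_mem_minimalPrimes_le_liesOver hq M.asIdeal (hMm ▸ le_sup_right.trans hpqm)
  have hPQ : P ≠ Q := fun e => hpq (by rw [hPp.over, hQq.over, e])
  exact M.2.ne_top (top_le_iff.mp (h P hP Q hQ hPQ ▸ sup_le hPM hQM))

theorem MPC.of_ringEquiv {R S : Type*} [CommRing R] [CommRing S] (e : R ≃+* S) (h : MPC S) :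
    MPC R := by
  have map_mem {I : Ideal R} (hI : I ∈ minimalPrimes R) : I.map e ∈ minimalPrimes S := by
    have := Ideal.minimalPrimes_comap_of_surjective (f := (e.symm : S →+* R)) e.symm.surjective hI
    rw [Ideal.comap_bot_of_injective (e.symm : S →+* R) e.symm.injective] at this
    rwa [← Ideal.comap_symm]
  have map_injective : Function.Injective (Ideal.map e) := fun I J hIJ => by
    simpa [Ideal.comap_map_of_bijective _ e.bijective] using congrArg (Ideal.comap e) hIJ
  intro p hp q hq hpq
  apply map_injective
  rw [Ideal.map_sup, Ideal.map_top]
  exact h _ (map_mem hp) _ (map_mem hq) (map_injective.ne hpq)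

theorem MPC.of_faithfullyFlat {R S : Type*} [CommRing R] [CommRing S] [Algebra R S]
    [Module.FaithfullyFlat R S] (h : MPC S) : MPC R :=
  h.of_hasGoingDown PrimeSpectrum.comap_surjective_of_faithfullyFlat

/-- If `A ⊗ₖ B` satisfies MPC, then so do `A` and `B`. -/
theorem stmt6 {k A B : Type*} [Field k] [CommRing A] [CommRing B] [Nontrivial A]
    [Nontrivial B] [Algebra k A] [Algebra k B]
    (h : MPC (A ⊗[k] B)) : MPC A ∧ MPC B :=
  ⟨h.of_faithfullyFlat,
    (h.of_ringEquiv (Algebra.TensorProduct.comm k B A).toRingEquiv).of_faithfullyFlat⟩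
end

section
/- Let k = ℝ, K = ℂ, and A = ℝ + X·ℂ[X]_(X), the pullback subring of V = ℂ[X]_(X) consisting of power-series-type elements with real constant term. Then A is a local one-dimensional domain satisfying MPC, but ℂ ⊗_ℝ A does not satisfy MPC: its two minimal primes are both contained in a common maximal ideal. -/
open Polynomial TensorProduct

noncomputable section

/-- The prime ideal `(X)` of `ℂ[X]`, realized as the kernel of evaluation at `0`. -/
abbrev P0 : Ideal (Polynomial ℂ) := RingHom.ker (Polynomial.evalRingHom (0 : ℂ))

instance : P0.IsPrime := RingHom.ker_isPrime _

/-- The DVR `V = ℂ[X]_(X)`. -/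
abbrev V : Type := Localization.AtPrime P0

/-- The canonical embedding `ℂ → V`. -/
def cToV : ℂ →+* V := (algebraMap (Polynomial ℂ) V).comp (Polynomial.C : ℂ →+* Polynomial ℂ)

/-- The subring `A = ℝ + X·ℂ[X]_(X)` of `V`: those elements whose residue
(modulo the maximal ideal of the local ring `V`) is real. -/
def Asub : Subring V :=
  Subring.comap (IsLocalRing.residue V)
    (((IsLocalRing.residue V).comp (cToV.comp (algebraMap ℝ ℂ))).range)

/-- The structure map `ℝ → A`. -/
def rToA : ℝ →+* Asub :=
  (cToV.comp (algebraMap ℝ ℂ)).codRestrict Asub.toSubsemiring (fun r => ⟨r, rfl⟩)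

instance : Algebra ℝ Asub := rToA.toAlgebra

/-! `A` is the preimage of `ℝ ⊆ ℂ = V/𝔪` under the residue map of the DVR `V`, so it is local
with maximal ideal `𝔪 ⊆ A`. For `0 ≠ x ∈ A` and `b ∈ 𝔪`, some `bⁿ` lies in `xV`, hence `bⁿ⁺¹` lies
in `x𝔪 ⊆ xA`: every nonzero prime of `A` is maximal and `dim A = 1`.

The `ℝ`-algebra maps `ℂ ⊗_ℝ A → V`, `z ⊗ a ↦ z a` and `z ⊗ a ↦ z̄ a`, have prime kernels `p`, `q`.
Writing `t = 1 ⊗ a + i ⊗ b`, the two images are `a ± i b`, so `p ⊓ q = 0` and `p`, `q` are the only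
minimal primes. Modulo `𝔪` the two images are `w` and `w̄` for some `w ∈ ℂ`, so both kernels lie in
the common maximal ideal `{t | w = 0}`. -/

open IsLocalRing

section ResiduePullback

variable {R : Type*} [CommRing R] [IsLocalRing R] {k : Subring (ResidueField R)}

theorem Subring.mem_comap_residue_of_mem_maximalIdeal {v : R} (hv : v ∈ maximalIdeal R) :
    v ∈ k.comap (residue R) := by
  simp [Subring.mem_comap, (residue_eq_zero_iff v).mpr hv]

theorem Subring.isUnit_of_residue_ne_zero (hk : ∀ x ∈ k, x⁻¹ ∈ k) {a : k.comap (residue R)}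
    (ha : residue R a ≠ 0) : IsUnit a := by
  obtain ⟨u, hu⟩ := (residue_ne_zero_iff_isUnit _).mp ha
  have hinv : (↑u⁻¹ : R) ∈ k.comap (residue R) := by
    rw [Subring.mem_comap, map_units_inv, hu]
    exact hk _ a.2
  refine .of_mul_eq_one ⟨_, hinv⟩ (Subtype.ext ?_)
  simp [← hu]

theorem Subring.isUnit_comap_residue_iff (hk : ∀ x ∈ k, x⁻¹ ∈ k) {a : k.comap (residue R)} :
    IsUnit a ↔ IsUnit (a : R) :=
  ⟨(·.map (Subring.subtype _)),
    fun ha ↦ isUnit_of_residue_ne_zero hk ((residue_ne_zero_iff_isUnit _).mpr ha)⟩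

theorem Subring.isLocalRing_comap_residue (hk : ∀ x ∈ k, x⁻¹ ∈ k) :
    IsLocalRing (k.comap (residue R)) := by
  refine .of_isUnit_or_isUnit_one_sub_self fun a ↦ ?_
  by_cases ha : residue R a = 0
  · exact .inr (isUnit_of_residue_ne_zero hk (by simp [ha]))
  · exact .inl (isUnit_of_residue_ne_zero hk ha)

theorem Subring.ringKrullDim_comap_residue (hk : ∀ x ∈ k, x⁻¹ ∈ k) [IsDomain R]
    (hR : ringKrullDim R = 1) : ringKrullDim (k.comap (residue R)) = 1 := by
  let := isLocalRing_comap_residue hk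
  obtain ⟨hRfield, hRrad⟩ := ringKrullDim_eq_one_iff_of_isLocalRing_isDomain.mp hR
  refine ringKrullDim_eq_one_iff_of_isLocalRing_isDomain.mpr ⟨fun hfield ↦ ?_, fun x hx b hb ↦ ?_⟩
  · obtain ⟨v, hv, hv0⟩ := Submodule.exists_mem_ne_zero_of_ne_bot
      ((isField_iff_maximalIdeal_eq).not.mp hRfield)
    obtain ⟨w, hw⟩ := hfield.mul_inv_cancel
      (a := ⟨v, mem_comap_residue_of_mem_maximalIdeal hv⟩) (Subtype.coe_ne_coe.mp hv0)
    exact (mem_maximalIdeal _).mp hv ((isUnit_comap_residue_iff hk).mp (.of_mul_eq_one w hw))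
  · have hbR : (b : R) ∈ maximalIdeal R := fun hu ↦ hb ((isUnit_comap_residue_iff hk).mpr hu)
    obtain ⟨n, hn⟩ := hRrad x (by exact_mod_cast hx) hbR
    obtain ⟨c, hc⟩ := Ideal.mem_span_singleton'.mp hn
    have hcb : c * b ∈ k.comap (residue R) :=
      mem_comap_residue_of_mem_maximalIdeal (Ideal.mul_mem_left _ _ hbR)
    refine ⟨n + 1, Ideal.mem_span_singleton'.mpr ⟨⟨c * b, hcb⟩, Subtype.ext ?_⟩⟩
    simp [pow_succ, ← hc]
    ring

end ResiduePullback

theorem mpc_of_isDomain (R : Type*) [CommRing R] [IsDomain R] : MPC R := by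
  intro p hp q hq hpq
  rw [IsDomain.minimalPrimes_eq_singleton_bot] at hp hq
  exact absurd (hp.trans hq.symm) hpq

theorem not_mpc_of_le_isMaximal {R : Type*} [CommRing R] {p q M : Ideal R}
    (hp : p ∈ minimalPrimes R) (hq : q ∈ minimalPrimes R) (hpq : p ≠ q) (hM : M.IsMaximal)
    (hpM : p ≤ M) (hqM : q ≤ M) : ¬ MPC R :=
  fun h ↦ hM.ne_top (top_le_iff.mp (h p hp q hq hpq ▸ sup_le hpM hqM))

theorem minimalPrimes_eq_pair {R : Type*} [CommRing R] {p q : Ideal R} [p.IsPrime] [q.IsPrime]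
    (hpq : p ⊓ q = ⊥) (hp : ¬ p ≤ q) (hq : ¬ q ≤ p) : minimalPrimes R = {p, q} := by
  have above : ∀ r : Ideal R, r.IsPrime → p ≤ r ∨ q ≤ r := fun r hr ↦
    hr.inf_le.mp (hpq ▸ bot_le)
  ext r
  constructor
  · rintro ⟨⟨hr, -⟩, hmin⟩
    rcases above r hr with h | h
    · exact .inl (le_antisymm (hmin ⟨‹_›, bot_le⟩ h) h)
    · exact .inr (le_antisymm (hmin ⟨‹_›, bot_le⟩ h) h)
  · rintro (rfl | rfl) <;> refine ⟨⟨‹_›, bot_le⟩, fun s ⟨hs, _⟩ hsr ↦ ?_⟩ <;>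
      rcases above s hs with h | h
    exacts [h, absurd (h.trans hsr) hq, absurd (h.trans hsr) hp, h]

theorem RingHom.ker_le_ker_comp {R S T : Type*} [Ring R] [Ring S] [Ring T] (f : R →+* S)
    (g : S →+* T) : RingHom.ker f ≤ RingHom.ker (g.comp f) := fun x hx ↦ by
  rw [RingHom.mem_ker, RingHom.comp_apply, RingHom.mem_ker.mp hx, map_zero]

theorem Complex.exists_eq_one_tmul_add_I_tmul {M : Type*} [AddCommGroup M] [Module ℝ M]
    (t : ℂ ⊗[ℝ] M) : ∃ a b : M, t = 1 ⊗ₜ a + I ⊗ₜ b := by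
  obtain ⟨c, rfl⟩ := TensorProduct.eq_repr_basis_left Complex.basisOneI t
  exact ⟨c 0, c 1, by simp [Finsupp.sum_fintype]⟩

theorem RingHom.inv_mem_range {K L : Type*} [DivisionRing K] [DivisionRing L] (f : K →+* L)
    {x : L} (hx : x ∈ f.range) : x⁻¹ ∈ f.range := by
  obtain ⟨r, rfl⟩ := hx
  exact ⟨r⁻¹, map_inv₀ f r⟩

instance : P0.IsMaximal :=
  RingHom.ker_isMaximal_of_surjective _ fun z ↦ ⟨C z, eval_C⟩

instance : IsDiscreteValuationRing V :=
  IsLocalization.AtPrime.isDiscreteValuationRing_of_dedekind_domain ℂ[X]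
    ((Submodule.ne_bot_iff P0).mpr ⟨X, by simp [RingHom.mem_ker], X_ne_zero⟩) V

theorem residue_cToV_surjective : Function.Surjective ((residue V).comp cToV) := by
  intro y
  obtain ⟨f, rfl⟩ := P0.algebraMap_residueField_surjective y
  refine ⟨f.eval 0, ?_⟩
  show algebraMap ℂ[X] P0.ResidueField (C (f.eval 0)) = _
  rw [← sub_eq_zero, ← map_sub, Ideal.algebraMap_residueField_eq_zero]
  simp

instance : IsLocalRing Asub :=
  Subring.isLocalRing_comap_residue fun _ ↦ RingHom.inv_mem_range _

theorem ringKrullDim_Asub : ringKrullDim Asub = 1 :=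
  Subring.ringKrullDim_comap_residue (fun _ ↦ RingHom.inv_mem_range _)
    (IsDiscreteValuationRing.ringKrullDim_eq_one V)

theorem algebraMap_real_V (r : ℝ) : algebraMap ℝ V r = cToV r := by
  rw [IsScalarTower.algebraMap_apply ℝ ℂ[X] V, IsScalarTower.algebraMap_apply ℝ ℂ ℂ[X]]
  rfl

def complexToV : ℂ →ₐ[ℝ] V where
  __ := cToV
  commutes' r := (algebraMap_real_V r).symm

def asubToV : Asub →ₐ[ℝ] V where
  __ := Asub.subtype
  commutes' r := (algebraMap_real_V r).symm

theorem complexToV_apply (z : ℂ) : complexToV z = cToV z := rfl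

theorem asubToV_apply (a : Asub) : asubToV a = a := rfl

def tensorToV : ℂ ⊗[ℝ] Asub →ₐ[ℝ] V :=
  Algebra.TensorProduct.productMap complexToV asubToV

def tensorToVConj : ℂ ⊗[ℝ] Asub →ₐ[ℝ] V :=
  Algebra.TensorProduct.productMap (complexToV.comp Complex.conjAe.toAlgHom) asubToV

theorem tensorToV_apply (a b : Asub) :
    tensorToV (1 ⊗ₜ a + Complex.I ⊗ₜ b) = a + cToV Complex.I * b := by
  simp [tensorToV, complexToV_apply, asubToV_apply]

theorem tensorToVConj_apply (a b : Asub) :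
    tensorToVConj (1 ⊗ₜ a + Complex.I ⊗ₜ b) = a - cToV Complex.I * b := by
  simp [tensorToVConj, complexToV_apply, asubToV_apply]
  ring

instance : (RingHom.ker tensorToV).IsPrime := RingHom.ker_isPrime _

instance : (RingHom.ker tensorToVConj).IsPrime := RingHom.ker_isPrime _

instance : CharZero V := charZero_of_injective_algebraMap (algebraMap ℝ V).injective

theorem ker_tensorToV_inf_ker_tensorToVConj :
    RingHom.ker tensorToV ⊓ RingHom.ker tensorToVConj = ⊥ := by
  refine eq_bot_iff.mpr fun t ht ↦ ?_
  obtain ⟨a, b, rfl⟩ := Complex.exists_eq_one_tmul_add_I_tmul t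
  obtain ⟨h₁, h₂⟩ := Ideal.mem_inf.mp ht
  rw [RingHom.mem_ker, tensorToV_apply] at h₁
  rw [RingHom.mem_ker, tensorToVConj_apply] at h₂
  have ha : (2 : V) * a = 0 := by linear_combination h₁ + h₂
  have hb : (2 * cToV Complex.I) * b = 0 := by linear_combination h₁ - h₂
  simp only [mul_eq_zero, two_ne_zero, map_eq_zero, Complex.I_ne_zero, or_self, false_or,
    ZeroMemClass.coe_eq_zero] at ha hb
  simp [ha, hb]

theorem exists_tensorToV_eq_of_mem_maximalIdeal {a b : V} (ha : a ∈ maximalIdeal V)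
    (hb : b ∈ maximalIdeal V) : ∃ t : ℂ ⊗[ℝ] Asub,
      tensorToV t = a + cToV Complex.I * b ∧ tensorToVConj t = a - cToV Complex.I * b :=
  ⟨1 ⊗ₜ ⟨a, Subring.mem_comap_residue_of_mem_maximalIdeal ha⟩ +
      Complex.I ⊗ₜ ⟨b, Subring.mem_comap_residue_of_mem_maximalIdeal hb⟩,
    tensorToV_apply _ _, tensorToVConj_apply _ _⟩

theorem exists_mem_maximalIdeal_V_ne_zero : ∃ π ∈ maximalIdeal V, π ≠ 0 :=
  Submodule.exists_mem_ne_zero_of_ne_bot (IsDiscreteValuationRing.not_a_field V)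

theorem not_ker_tensorToV_le_ker_tensorToVConj :
    ¬ RingHom.ker tensorToV ≤ RingHom.ker tensorToVConj := by
  obtain ⟨π, hπ, hπ0⟩ := exists_mem_maximalIdeal_V_ne_zero
  obtain ⟨t, h₁, h₂⟩ :=
    exists_tensorToV_eq_of_mem_maximalIdeal (neg_mem (Ideal.mul_mem_left _ (cToV Complex.I) hπ)) hπ
  intro h
  have h₂' := h (show tensorToV t = 0 by rw [h₁]; ring)
  rw [RingHom.mem_ker, h₂] at h₂'
  have : (2 * cToV Complex.I) * π = 0 := by linear_combination -h₂'
  simp [hπ0] at this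

theorem not_ker_tensorToVConj_le_ker_tensorToV :
    ¬ RingHom.ker tensorToVConj ≤ RingHom.ker tensorToV := by
  obtain ⟨π, hπ, hπ0⟩ := exists_mem_maximalIdeal_V_ne_zero
  obtain ⟨t, h₁, h₂⟩ :=
    exists_tensorToV_eq_of_mem_maximalIdeal (Ideal.mul_mem_left _ (cToV Complex.I) hπ) hπ
  intro h
  have h₁' := h (show tensorToVConj t = 0 by rw [h₂]; ring)
  rw [RingHom.mem_ker, h₁] at h₁'
  have : (2 * cToV Complex.I) * π = 0 := by linear_combination h₁'
  simp [hπ0] at this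

theorem exists_residue_tensorToV_eq (t : ℂ ⊗[ℝ] Asub) : ∃ z : ℂ,
    residue V (tensorToV t) = residue V (cToV z) ∧
      residue V (tensorToVConj t) = residue V (cToV (starRingEnd ℂ z)) := by
  obtain ⟨a, b, rfl⟩ := Complex.exists_eq_one_tmul_add_I_tmul t
  obtain ⟨r, hr⟩ : ∃ r : ℝ, residue V (cToV r) = residue V a := a.2
  obtain ⟨s, hs⟩ : ∃ s : ℝ, residue V (cToV s) = residue V b := b.2
  refine ⟨r + s * Complex.I, ?_, ?_⟩
  · rw [tensorToV_apply]
    simp only [map_add, map_mul, ← hr, ← hs]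
    ring
  · rw [tensorToVConj_apply]
    simp only [map_sub, map_add, map_mul, ← hr, ← hs, Complex.conj_ofReal, Complex.conj_I,
      map_neg]
    ring

theorem ker_residue_comp_tensorToV_eq :
    RingHom.ker ((residue V).comp tensorToV.toRingHom) =
      RingHom.ker ((residue V).comp tensorToVConj.toRingHom) := by
  ext t
  obtain ⟨z, h₁, h₂⟩ := exists_residue_tensorToV_eq t
  have hz (w : ℂ) : residue V (cToV w) = 0 ↔ w = 0 := map_eq_zero ((residue V).comp cToV)
  simp only [RingHom.mem_ker, RingHom.comp_apply, AlgHom.toRingHom_eq_coe, RingHom.coe_coe, h₁,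
    h₂, hz, map_eq_zero]

theorem isMaximal_ker_residue_comp_tensorToV :
    (RingHom.ker ((residue V).comp tensorToV.toRingHom)).IsMaximal := by
  refine RingHom.ker_isMaximal_of_surjective _ fun y ↦ ?_
  obtain ⟨z, rfl⟩ := residue_cToV_surjective y
  exact ⟨z ⊗ₜ 1, by simp [tensorToV, complexToV_apply]⟩

/-- **Example 3.2.** `A = ℝ + X·ℂ[X]_(X)` is a local one-dimensional
domain (hence satisfies MPC), but `ℂ ⊗_ℝ A` fails MPC: it has exactly two minimal
primes and they are contained in a common maximal ideal. -/
theorem stmt7 :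
    IsLocalRing Asub ∧ IsDomain Asub ∧ ringKrullDim Asub = 1 ∧ MPC Asub ∧
      ¬ MPC (ℂ ⊗[ℝ] Asub) ∧
      ∃ p q : Ideal (ℂ ⊗[ℝ] Asub),
        minimalPrimes (ℂ ⊗[ℝ] Asub) = {p, q} ∧ p ≠ q ∧
          ∃ M : Ideal (ℂ ⊗[ℝ] Asub), M.IsMaximal ∧ p ≤ M ∧ q ≤ M := by
  have hmin := minimalPrimes_eq_pair ker_tensorToV_inf_ker_tensorToVConj
    not_ker_tensorToV_le_ker_tensorToVConj not_ker_tensorToVConj_le_ker_tensorToV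
  have hne : RingHom.ker tensorToV ≠ RingHom.ker tensorToVConj :=
    fun h ↦ not_ker_tensorToV_le_ker_tensorToVConj h.le
  have hpM := RingHom.ker_le_ker_comp tensorToV.toRingHom (residue V)
  have hqM := ker_residue_comp_tensorToV_eq ▸
    RingHom.ker_le_ker_comp tensorToVConj.toRingHom (residue V)
  refine ⟨inferInstance, inferInstance, ringKrullDim_Asub, mpc_of_isDomain _,
    not_mpc_of_le_isMaximal (hmin ▸ .inl rfl) (hmin ▸ .inr rfl) hne
      isMaximal_ker_residue_comp_tensorToV hpM hqM,
    _, _, hmin, hne, _, isMaximal_ker_residue_comp_tensorToV, hpM, hqM⟩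
end
end

section
/- Let k be an algebraically closed field and let A and B be k-algebras. Then A ⊗_k B satisfies MPC if and only if both A and B satisfy MPC. -/
open Polynomial TensorProduct

/-!
Over an algebraically closed field `k` the tensor product of two domains is a domain. It suffices
to treat `E ⊗[k] D` with `E` finitely generated. Expand elements in a `k`-basis of `D`, with
coefficients in `E`. Every `k`-point `ψ : E → k` maps `E ⊗[k] D` to the domain `D`, acting on the
coefficients. By the Nullstellensatz, whenever `a * b ≠ 0` in `E` some `ψ` is nonzero on both
`a` and `b`. So if `x` and `y` are nonzero, some `ψ` keeps both nonzero, hence `x * y ≠ 0`.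

Hence for primes `p`, `q` the ideal `p ⊗ B + A ⊗ q` is prime and contracts to `p` and `q`, and
the minimal primes of `A ⊗[k] B` are exactly these ideals with `p`, `q` minimal. The sum of two of
them is `(p + p') ⊗ B + A ⊗ (q + q')`, which is the unit ideal iff `p + p' = A` or `q + q' = A`.
So MPC for `A ⊗[k] B` is MPC for `A` and for `B` together.
-/

theorem exists_algHom_apply_ne_zero {k E : Type*} [Field k] [IsAlgClosed k] [CommRing E]
    [IsReduced E] [Algebra k E] [Algebra.FiniteType k E] {a : E} (ha : a ≠ 0) :
    ∃ ψ : E →ₐ[k] k, ψ a ≠ 0 := by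
  have hE : IsJacobsonRing E := isJacobsonRing_of_finiteType (A := k)
  obtain ⟨m, hm, ham⟩ : ∃ m : Ideal E, m.IsMaximal ∧ a ∉ m := by
    have ha' : a ∉ (⊥ : Ideal E).jacobson := by
      rwa [IsJacobsonRing.out hE Ideal.isRadical_bot, Ideal.mem_bot]
    simpa [Ideal.jacobson, Ideal.mem_sInf] using ha'
  let := Ideal.Quotient.field m
  have : Module.Finite k (E ⧸ m) := finite_of_finite_type_of_isJacobsonRing k _
  let e : k ≃ₐ[k] E ⧸ m := AlgEquiv.ofBijective (Algebra.ofId k _)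
    IsAlgClosed.algebraMap_bijective_of_isIntegral
  refine ⟨e.symm.toAlgHom.comp (Ideal.Quotient.mkₐ k m), ?_⟩
  simpa [Ideal.Quotient.eq_zero_iff_mem] using ham

section TensorDomain

variable {k D E : Type*} [Field k] [CommRing D] [CommRing E] [Algebra k D] [Algebra k E]

theorem repr_productMap_eq_mapRange {ι : Type*} (b : Module.Basis ι k D) (ψ : E →ₐ[k] k)
    (z : E ⊗[k] D) :
    b.repr (Algebra.TensorProduct.productMap ((Algebra.ofId k D).comp ψ) (AlgHom.id k D) z) =
      Finsupp.mapRange ψ (map_zero ψ) ((Algebra.TensorProduct.basis E b).repr z) := by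
  induction z with
  | zero => simp
  | tmul a d =>
    ext i
    simp [← Algebra.smul_def]
  | add z w hz hw => simp [hz, hw, Finsupp.mapRange_add]

theorem noZeroDivisors_tensorProduct_of_finiteType [IsAlgClosed k] [IsDomain D] [IsDomain E]
    [Algebra.FiniteType k E] : NoZeroDivisors (E ⊗[k] D) := by
  refine ⟨fun {x y} hxy => ?_⟩
  by_contra! hne
  let b := Module.Free.chooseBasis k D
  let c := (Algebra.TensorProduct.basis E b).repr
  obtain ⟨i, hi⟩ := Finsupp.ne_iff.mp ((map_ne_zero_iff c c.injective).mpr hne.1)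
  obtain ⟨j, hj⟩ := Finsupp.ne_iff.mp ((map_ne_zero_iff c c.injective).mpr hne.2)
  obtain ⟨ψ, hψ⟩ := exists_algHom_apply_ne_zero (k := k) (mul_ne_zero hi hj)
  let π := Algebra.TensorProduct.productMap ((Algebra.ofId k D).comp ψ) (AlgHom.id k D)
  have hπ : ∀ z i, ψ (c z i) ≠ 0 → π z ≠ 0 := by
    intro z i hz hπz
    have := DFunLike.congr_fun (repr_productMap_eq_mapRange b ψ z) i
    change b.repr (π z) i = ψ (c z i) at this
    rw [hπz, map_zero, Finsupp.zero_apply] at this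
    exact hz this.symm
  rw [map_mul] at hψ
  have := mul_ne_zero (hπ x i (left_ne_zero_of_mul hψ)) (hπ y j (right_ne_zero_of_mul hψ))
  rw [← map_mul, hxy, map_zero] at this
  exact this rfl

theorem Subalgebra.baseChange_mono {C C' : Subalgebra k E} (h : C ≤ C') :
    C.baseChange D ≤ C'.baseChange D := by
  rintro _ ⟨z, rfl⟩
  induction z with
  | zero => simp
  | tmul d c => exact Subalgebra.tmul_mem_baseChange (h c.2) d
  | add z w hz hw => rw [map_add]; exact add_mem hz hw

theorem isDomain_tensorProduct_of_isAlgClosed [IsAlgClosed k] [IsDomain D] [IsDomain E] :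
    IsDomain (D ⊗[k] E) := by
  have : Nontrivial (D ⊗[k] E) :=
    Algebra.TensorProduct.nontrivial_of_algebraMap_injective_of_flat_left k D E
      (algebraMap k E).injective
  suffices NoZeroDivisors (D ⊗[k] E) from NoZeroDivisors.to_isDomain _
  refine ⟨fun {x y} hxy => ?_⟩
  obtain ⟨C, hC, hx⟩ := exists_fg_and_mem_baseChange x
  obtain ⟨C', hC', hy⟩ := exists_fg_and_mem_baseChange y
  have : Algebra.FiniteType k ↥(C ⊔ C') := (Subalgebra.fg_iff_finiteType _).mp (hC.sup hC')
  have : NoZeroDivisors (↥(C ⊔ C') ⊗[k] D) := noZeroDivisors_tensorProduct_of_finiteType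
  have : NoZeroDivisors (D ⊗[k] ↥(C ⊔ C')) :=
    (Algebra.TensorProduct.comm k D _).toMulEquiv.noZeroDivisors (_ ⊗[k] D)
  obtain ⟨x, rfl⟩ := (AlgHom.mem_range _).mp
    (Subalgebra.baseChange_mono (le_sup_left : C ≤ C ⊔ C') hx)
  obtain ⟨y, rfl⟩ := (AlgHom.mem_range _).mp
    (Subalgebra.baseChange_mono (le_sup_right : C' ≤ C ⊔ C') hy)
  have hj : Function.Injective (Algebra.TensorProduct.map (AlgHom.id D D) (C ⊔ C').val) :=
    Module.Flat.lTensor_preserves_injective_linearMap _ Subtype.val_injective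
  rw [← map_mul, map_eq_zero_iff _ hj] at hxy
  rcases mul_eq_zero.mp hxy with h | h <;> simp [h]

end TensorDomain

section TensorIdeal

variable {k A B : Type*} [Field k] [CommRing A] [CommRing B] [Algebra k A] [Algebra k B]

variable (k) in
def tensorIdeal (I : Ideal A) (J : Ideal B) : Ideal (A ⊗[k] B) :=
  I.map (Algebra.TensorProduct.includeLeft : A →ₐ[k] A ⊗[k] B) ⊔
    J.map (Algebra.TensorProduct.includeRight : B →ₐ[k] A ⊗[k] B)

theorem ker_map_mkₐ_eq_tensorIdeal (I : Ideal A) (J : Ideal B) :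
    RingHom.ker (Algebra.TensorProduct.map (Ideal.Quotient.mkₐ k I) (Ideal.Quotient.mkₐ k J)) =
      tensorIdeal k I J := by
  rw [Algebra.TensorProduct.map_ker _ _ (Ideal.Quotient.mkₐ_surjective k I)
    (Ideal.Quotient.mkₐ_surjective k J), ← RingHom.ker_coe_toRingHom, Ideal.Quotient.mkₐ_ker,
    ← RingHom.ker_coe_toRingHom, Ideal.Quotient.mkₐ_ker, tensorIdeal]

theorem tensorIdeal_le_iff {I : Ideal A} {J : Ideal B} {P : Ideal (A ⊗[k] B)} :
    tensorIdeal k I J ≤ P ↔ I ≤ P.comap (Algebra.TensorProduct.includeLeft (S := k)) ∧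
      J ≤ P.comap Algebra.TensorProduct.includeRight := by
  simp only [tensorIdeal, sup_le_iff, Ideal.map_le_iff_le_comap]

theorem tensorIdeal_sup_tensorIdeal (I I' : Ideal A) (J J' : Ideal B) :
    tensorIdeal k I J ⊔ tensorIdeal k I' J' = tensorIdeal k (I ⊔ I') (J ⊔ J') := by
  simp only [tensorIdeal, Ideal.map_sup]
  exact sup_sup_sup_comm _ _ _ _

theorem tensorIdeal_eq_top_iff {I : Ideal A} {J : Ideal B} :
    tensorIdeal k I J = ⊤ ↔ I = ⊤ ∨ J = ⊤ := by
  refine ⟨fun h => ?_, ?_⟩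
  · by_contra! hIJ
    have : Nontrivial (A ⧸ I) := Ideal.Quotient.nontrivial_iff.mpr hIJ.1
    have : Nontrivial (B ⧸ J) := Ideal.Quotient.nontrivial_iff.mpr hIJ.2
    have : Nontrivial ((A ⧸ I) ⊗[k] (B ⧸ J)) :=
      Algebra.TensorProduct.nontrivial_of_algebraMap_injective_of_flat_left k _ _
        (algebraMap k (B ⧸ J)).injective
    exact RingHom.ker_ne_top _ ((ker_map_mkₐ_eq_tensorIdeal I J).trans h)
  · rintro (rfl | rfl) <;> simp [tensorIdeal, Ideal.map_top]

theorem comap_includeLeft_tensorIdeal (I : Ideal A) {J : Ideal B} (hJ : J ≠ ⊤) :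
    (tensorIdeal k I J).comap (Algebra.TensorProduct.includeLeft (S := k)) = I := by
  have : Nontrivial (B ⧸ J) := Ideal.Quotient.nontrivial_iff.mpr hJ
  ext a
  rw [← ker_map_mkₐ_eq_tensorIdeal, Ideal.mem_comap, RingHom.mem_ker, ← AlgHom.comp_apply,
    Algebra.TensorProduct.map_comp_includeLeft, AlgHom.comp_apply,
    map_eq_zero_iff _ (Algebra.TensorProduct.includeLeft_injective (algebraMap k _).injective),
    Ideal.Quotient.mkₐ_eq_mk, Ideal.Quotient.eq_zero_iff_mem]

theorem comap_includeRight_tensorIdeal {I : Ideal A} (hI : I ≠ ⊤) (J : Ideal B) :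
    (tensorIdeal k I J).comap Algebra.TensorProduct.includeRight = J := by
  have : Nontrivial (A ⧸ I) := Ideal.Quotient.nontrivial_iff.mpr hI
  ext b
  rw [← ker_map_mkₐ_eq_tensorIdeal, Ideal.mem_comap, RingHom.mem_ker, ← AlgHom.comp_apply,
    Algebra.TensorProduct.map_comp_includeRight, AlgHom.comp_apply,
    map_eq_zero_iff _ (Algebra.TensorProduct.includeRight_injective (algebraMap k _).injective),
    Ideal.Quotient.mkₐ_eq_mk, Ideal.Quotient.eq_zero_iff_mem]

theorem isPrime_tensorIdeal [IsAlgClosed k] (p : Ideal A) (q : Ideal B) [p.IsPrime] [q.IsPrime] :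
    (tensorIdeal k p q).IsPrime := by
  have := isDomain_tensorProduct_of_isAlgClosed (k := k) (D := A ⧸ p) (E := B ⧸ q)
  rw [← ker_map_mkₐ_eq_tensorIdeal]
  exact RingHom.ker_isPrime _

theorem exists_tensorIdeal_le {P : Ideal (A ⊗[k] B)} (hP : P.IsPrime) :
    ∃ p ∈ minimalPrimes A, ∃ q ∈ minimalPrimes B, tensorIdeal k p q ≤ P := by
  obtain ⟨p, hp, hpP⟩ := Ideal.exists_minimalPrimes_le
    (bot_le (a := P.comap (Algebra.TensorProduct.includeLeft (S := k) (B := B))))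
  obtain ⟨q, hq, hqP⟩ := Ideal.exists_minimalPrimes_le
    (bot_le (a := P.comap (Algebra.TensorProduct.includeRight (R := k) (A := A))))
  exact ⟨p, hp, q, hq, tensorIdeal_le_iff.mpr ⟨hpP, hqP⟩⟩

theorem tensorIdeal_inj {I I' : Ideal A} {J J' : Ideal B} (hI : I ≠ ⊤) (hI' : I' ≠ ⊤)
    (hJ : J ≠ ⊤) (hJ' : J' ≠ ⊤) :
    tensorIdeal k I J = tensorIdeal k I' J' ↔ I = I' ∧ J = J' := by
  refine ⟨fun h => ⟨?_, ?_⟩, fun h => h.1 ▸ h.2 ▸ rfl⟩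
  · rw [← comap_includeLeft_tensorIdeal (k := k) I hJ, h, comap_includeLeft_tensorIdeal I' hJ']
  · rw [← comap_includeRight_tensorIdeal (k := k) hI J, h, comap_includeRight_tensorIdeal hI' J']

theorem minimalPrimes_tensorProduct [IsAlgClosed k] :
    minimalPrimes (A ⊗[k] B) =
      (fun pq => tensorIdeal k pq.1 pq.2) '' (minimalPrimes A ×ˢ minimalPrimes B) := by
  ext P
  constructor
  · intro hP
    obtain ⟨p, hp, q, hq, hle⟩ := exists_tensorIdeal_le (k := k) hP.1.1
    have := hp.1.1
    have := hq.1.1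
    exact ⟨(p, q), ⟨hp, hq⟩, le_antisymm hle (hP.2 ⟨isPrime_tensorIdeal p q, bot_le⟩ hle)⟩
  · rintro ⟨⟨p, q⟩, ⟨hp, hq⟩, rfl⟩
    have := hp.1.1
    have := hq.1.1
    refine ⟨⟨isPrime_tensorIdeal p q, bot_le⟩, fun Q hQ hQle => tensorIdeal_le_iff.mpr ⟨?_, ?_⟩⟩
    · exact hp.2 ⟨hQ.1.comap _, bot_le⟩
        ((Ideal.comap_mono hQle).trans_eq (comap_includeLeft_tensorIdeal p hq.1.1.ne_top))
    · exact hq.2 ⟨hQ.1.comap _, bot_le⟩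
        ((Ideal.comap_mono hQle).trans_eq (comap_includeRight_tensorIdeal hp.1.1.ne_top q))

theorem mpc_tensorProduct_iff [IsAlgClosed k] :
    MPC (A ⊗[k] B) ↔ ∀ p ∈ minimalPrimes A, ∀ q ∈ minimalPrimes B, ∀ p' ∈ minimalPrimes A,
      ∀ q' ∈ minimalPrimes B, p ≠ p' ∨ q ≠ q' → p ⊔ p' = ⊤ ∨ q ⊔ q' = ⊤ := by
  rw [MPC, minimalPrimes_tensorProduct]
  constructor
  · intro h p hp q hq p' hp' q' hq' hne
    rw [← tensorIdeal_eq_top_iff (k := k), ← tensorIdeal_sup_tensorIdeal]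
    refine h _ ⟨(p, q), ⟨hp, hq⟩, rfl⟩ _ ⟨(p', q'), ⟨hp', hq'⟩, rfl⟩ ?_
    rwa [Ne, tensorIdeal_inj hp.1.1.ne_top hp'.1.1.ne_top hq.1.1.ne_top hq'.1.1.ne_top, not_and_or]
  · rintro h _ ⟨⟨p, q⟩, ⟨hp, hq⟩, rfl⟩ _ ⟨⟨p', q'⟩, ⟨hp', hq'⟩, rfl⟩ hne
    rw [tensorIdeal_sup_tensorIdeal, tensorIdeal_eq_top_iff]
    refine h p hp q hq p' hp' q' hq' ?_
    rwa [Ne, tensorIdeal_inj hp.1.1.ne_top hp'.1.1.ne_top hq.1.1.ne_top hq'.1.1.ne_top,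
      not_and_or] at hne

end TensorIdeal

/-- Over an algebraically closed field, `A ⊗ₖ B` satisfies MPC
iff both `A` and `B` do. -/
theorem stmt8 {k A B : Type*} [Field k] [IsAlgClosed k] [CommRing A] [CommRing B]
    [Nontrivial A] [Nontrivial B] [Algebra k A] [Algebra k B] :
    MPC (A ⊗[k] B) ↔ MPC A ∧ MPC B := by
  rw [mpc_tensorProduct_iff]
  obtain ⟨p₀, hp₀⟩ := Ideal.nonempty_minimalPrimes (R := A) bot_ne_top
  obtain ⟨q₀, hq₀⟩ := Ideal.nonempty_minimalPrimes (R := B) bot_ne_top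
  constructor
  · intro h
    refine ⟨fun p hp p' hp' hne => ?_, fun q hq q' hq' hne => ?_⟩
    · simpa [hq₀.1.1.ne_top] using h p hp q₀ hq₀ p' hp' q₀ hq₀ (.inl hne)
    · simpa [hp₀.1.1.ne_top] using h p₀ hp₀ q hq p₀ hp₀ q' hq' (.inr hne)
  · rintro ⟨hA, hB⟩ p hp q hq p' hp' q' hq' (hne | hne)
    · exact .inl (hA p hp p' hp' hne)
    · exact .inr (hB q hq q' hq' hne)
end

section
/- Let A be an algebra over a field k and let K be a purely inseparable field extension of k. Then K ⊗_k A satisfies MPC if and only if A satisfies MPC. -/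
open Polynomial TensorProduct

/-!
A purely inseparable extension is radicial: every element of `K ⊗[k] A` has a power in the image
of `A`, so `Spec (K ⊗[k] A) → Spec A` is a homeomorphism. MPC only depends on the
specialization order of the spectrum, since `p ⊔ q = ⊤` exactly when no prime contains both.
-/

open PrimeSpectrum

lemma mpc_iff_eq_of_isMin_of_le {A : Type*} [CommRing A] :
    MPC A ↔ ∀ p q r : PrimeSpectrum A, IsMin p → IsMin q → p ≤ r → q ≤ r → p = q := by
  simp only [isMin_iff]
  constructor
  · intro h p q r hp hq hpr hqr
    by_contra hpq
    have hsup := h _ hp _ hq (mt PrimeSpectrum.ext hpq)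
    exact r.2.ne_top (top_le_iff.1 (hsup ▸ sup_le hpr hqr))
  · intro h p hp q hq hpq
    by_contra hsup
    obtain ⟨m, hm, hle⟩ := Ideal.exists_le_maximal _ hsup
    exact hpq congr(PrimeSpectrum.asIdeal
      $(h ⟨p, hp.1.1⟩ ⟨q, hq.1.1⟩ ⟨m, hm.isPrime⟩ hp hq (le_sup_left.trans hle)
        (le_sup_right.trans hle)))

lemma MPC.of_orderIso {A B : Type*} [CommRing A] [CommRing B]
    (e : PrimeSpectrum A ≃o PrimeSpectrum B) (h : MPC A) : MPC B := by
  rw [mpc_iff_eq_of_isMin_of_le] at h ⊢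
  intro p q r hp hq hpr hqr
  exact e.symm.injective (h _ _ (e.symm r) (e.symm.isMin_apply.2 hp)
    (e.symm.isMin_apply.2 hq) (e.symm.monotone hpr) (e.symm.monotone hqr))

noncomputable def PrimeSpectrum.comapOrderIsoOfIsHomeomorph {R S : Type*} [CommRing R]
    [CommRing S] (f : R →+* S) (hf : IsHomeomorph (comap f)) :
    PrimeSpectrum S ≃o PrimeSpectrum R :=
  RelIso.ofSurjective
    (OrderEmbedding.ofMapLEIff (comap f) fun x y => by
      rw [le_iff_specializes, le_iff_specializes]
      exact (hf.homeomorph _).isInducing.specializes_iff)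
    hf.surjective

theorem stmt10_general {k K A : Type*} [Field k] [Field K] [Algebra k K]
    [IsPurelyInseparable k K] [CommRing A] [Algebra k A] :
    MPC (K ⊗[k] A) ↔ MPC A := by
  let f : A →+* K ⊗[k] A :=
    (Algebra.TensorProduct.comm k A K).toRingHom.comp (algebraMap A (A ⊗[k] K))
  have hf : IsHomeomorph (comap f) := by
    rw [comap_comp]
    exact (isHomeomorph_comap_of_isPurelyInseparable k K A).comp
      (isHomeomorph_comap_of_bijective (Algebra.TensorProduct.comm k A K).bijective)
  let e := comapOrderIsoOfIsHomeomorph f hf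
  exact ⟨.of_orderIso e, .of_orderIso e.symm⟩

/-- For a purely inseparable field extension `K/k`, the ring
`K ⊗ₖ A` satisfies MPC iff `A` does. -/
theorem stmt10 {k K A : Type*} [Field k] [Field K] [Algebra k K]
    [IsPurelyInseparable k K] [CommRing A] [Nontrivial A] [Algebra k A] :
    MPC (K ⊗[k] A) ↔ MPC A :=
  stmt10_general
end
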